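/- arXiv:1012.1890 — 2 statements merged into one kernel-verified Lean document; each statement's English description precedes it below -/
import Mathlib

section
/- The binding information B(X_A) = H(X_A) - Σ_{α∈A} H(X_α | X_{A\{α}}) of a finite family of discrete random variables is nonnegative. -/
open scoped Classical
open Finset Real

noncomputable section

/-- Probability of the event `X = s` under weights `p` on a finite sample space. -/
def pr {Ω : Type*} [Fintype Ω] (p : Ω → ℝ) {S : Type*} (X : Ω → S) (s : S) : ℝ :=
  ∑ ω, if X ω = s then p ω else 0

/-- Shannon entropy of a finitely-valued random variable `X`. -/
def ent {Ω : Type*} [Fintype Ω] (p : Ω → ℝ) {S : Type*} [Fintype S] (X : Ω → S) : ℝ :=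
  ∑ s, Real.negMulLog (pr p X s)

/-- Conditional entropy `H(X | Y)`. -/
def condEnt {Ω : Type*} [Fintype Ω] (p : Ω → ℝ) {S T : Type*} [Fintype S] [Fintype T]
    (X : Ω → S) (Y : Ω → T) : ℝ :=
  ent p (fun ω => (X ω, Y ω)) - ent p Y

/-- The joint random variable of a finite family. -/
def jointVar {Ω : Type*} {A : Type*} {S : A → Type*} (X : ∀ α, Ω → S α) :
    Ω → ∀ α, S α :=
  fun ω α => X α ω

/-- The tuple of all variables except `α`. -/
def restVar {Ω : Type*} {A : Type*} {S : A → Type*} (X : ∀ α, Ω → S α) (α : A) :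
    Ω → ∀ β : {β : A // β ≠ α}, S β.1 :=
  fun ω β => X β.1 ω

/-- Binding information `B(X_A)`. -/
def bindingInfo {Ω : Type*} [Fintype Ω] (p : Ω → ℝ) {A : Type*} [Fintype A]
    {S : A → Type*} [∀ α, Fintype (S α)] (X : ∀ α, Ω → S α) : ℝ :=
  ent p (jointVar X) - ∑ α, condEnt p (X α) (restVar X α)

/-- Multi-information `I(X_A)`. -/
def multiInfo {Ω : Type*} [Fintype Ω] (p : Ω → ℝ) {A : Type*} [Fintype A]
    {S : A → Type*} [∀ α, Fintype (S α)] (X : ∀ α, Ω → S α) : ℝ :=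
  (∑ α, ent p (X α)) - ent p (jointVar X)

/-! Adding the variables one at a time, the chain rule writes `H(X_A) - H(X_∅)` as the sum over
`α` of `H(X_α | X_s)`, where `s` is the set of variables added before `α`. Each term dominates
`H(X_α | X_{A∖{α}})`, because conditioning on more variables can only lower entropy. That in turn
is submodularity `H(X,Y,Z) + H(Z) ≤ H(X,Z) + H(Y,Z)`, which is Gibbs' inequality comparing the
joint law of `(X,Y,Z)` with the law `P(x,z) P(y,z) / P(z)` under which `X` and `Y` are
conditionally independent given `Z`. -/

lemma sub_le_mul_log_sub_log {a b : ℝ} (ha : 0 ≤ a) (hb : 0 ≤ b) (hab : a ≠ 0 → b ≠ 0) :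
    a - b ≤ a * (log a - log b) := by
  rcases ha.eq_or_lt with rfl | ha
  · simpa using hb
  have hb : 0 < b := hb.lt_of_ne' (hab ha.ne')
  have h := log_le_sub_one_of_pos (div_pos hb ha)
  rw [log_div hb.ne' ha.ne'] at h
  have hmul : a * (log b - log a) ≤ a * (b / a - 1) := mul_le_mul_of_nonneg_left h ha.le
  have hba : a * (b / a - 1) = b - a := by field_simp
  linarith

lemma sum_mul_log_sub_log_nonneg {ι : Type*} [Fintype ι] {P Q : ι → ℝ}
    (hP : ∀ i, 0 ≤ P i) (hQ : ∀ i, 0 ≤ Q i) (hPQ : ∀ i, P i ≠ 0 → Q i ≠ 0)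
    (hsum : ∑ i, Q i ≤ ∑ i, P i) :
    0 ≤ ∑ i, P i * (log (P i) - log (Q i)) := by
  have hpoint := sum_le_sum fun i (_ : i ∈ univ) => sub_le_mul_log_sub_log (hP i) (hQ i) (hPQ i)
  rw [sum_sub_distrib] at hpoint
  linarith

section

variable {Ω : Type*} [Fintype Ω] (p : Ω → ℝ) {S T U : Type*}

lemma pr_nonneg (hp : ∀ ω, 0 ≤ p ω) (X : Ω → S) (s : S) : 0 ≤ pr p X s :=
  sum_nonneg fun ω _ => by split_ifs <;> simp [hp ω]

lemma sum_pr_mul [Fintype S] (X : Ω → S) (g : S → ℝ) :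
    ∑ s, pr p X s * g s = ∑ ω, p ω * g (X ω) := by
  simp only [pr, sum_mul, ite_mul, zero_mul]
  rw [sum_comm]
  simp

lemma sum_pr [Fintype S] (X : Ω → S) : ∑ s, pr p X s = ∑ ω, p ω := by
  simpa using sum_pr_mul p X 1

lemma sum_pr_pair [Fintype S] (X : Ω → S) (Z : Ω → U) (z : U) :
    ∑ x, pr p (fun ω => (X ω, Z ω)) (x, z) = pr p Z z := by
  simp only [pr, Prod.mk.injEq, ite_and]
  rw [sum_comm]
  simp

lemma pr_le_pr_comp (hp : ∀ ω, 0 ≤ p ω) (X : Ω → S) (f : S → T) (s : S) :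
    pr p X s ≤ pr p (fun ω => f (X ω)) (f s) :=
  sum_le_sum fun ω _ => by
    split_ifs <;> simp_all [hp ω]

lemma pr_comp_of_injective {f : S → T} (hf : f.Injective) (X : Ω → S) (s : S) :
    pr p (fun ω => f (X ω)) (f s) = pr p X s := by
  simp only [pr, hf.eq_iff]

lemma ent_eq_sum_mul_neg_log [Fintype S] (X : Ω → S) :
    ent p X = ∑ ω, p ω * -log (pr p X (X ω)) := by
  rw [ent, ← sum_pr_mul p X (fun s => -log (pr p X s))]
  simp only [negMulLog, neg_mul, mul_neg]

lemma ent_comp_of_injective [Fintype S] [Fintype T] {f : S → T} (hf : f.Injective)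
    (X : Ω → S) : ent p (fun ω => f (X ω)) = ent p X := by
  simp only [ent_eq_sum_mul_neg_log, pr_comp_of_injective p hf]

lemma ent_of_subsingleton [Fintype S] [Subsingleton S] (hsum : ∑ ω, p ω = 1) (X : Ω → S) :
    ent p X = 0 := by
  have hpr : ∀ ω, pr p X (X ω) = 1 := fun ω => by
    simp [pr, Subsingleton.elim (X _) (X ω), hsum]
  simp [ent_eq_sum_mul_neg_log, hpr]

lemma ent_submodular [Fintype S] [Fintype T] [Fintype U] (hp : ∀ ω, 0 ≤ p ω)
    (X : Ω → S) (Y : Ω → T) (Z : Ω → U) :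
    ent p (fun ω => (X ω, Y ω, Z ω)) + ent p Z ≤
      ent p (fun ω => (X ω, Z ω)) + ent p (fun ω => (Y ω, Z ω)) := by
  set W : Ω → S × T × U := fun ω => (X ω, Y ω, Z ω)
  set P := pr p W
  set q₁ := pr p (fun ω => (X ω, Z ω))
  set q₂ := pr p (fun ω => (Y ω, Z ω))
  set r := pr p Z
  -- at `r z = 0` the junk value `x / 0 = 0` is harmless: `r z * r z / r z = r z` still holds
  set Q : S × T × U → ℝ := fun i => q₁ (i.1, i.2.2) * q₂ i.2 / r i.2.2
  have hpos : ∀ i, P i ≠ 0 → 0 < q₁ (i.1, i.2.2) ∧ 0 < q₂ i.2 ∧ 0 < r i.2.2 := by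
    intro i hi
    have hP : 0 < P i := (pr_nonneg p hp W i).lt_of_ne' hi
    exact ⟨hP.trans_le (pr_le_pr_comp p hp W (fun i => (i.1, i.2.2)) i),
      hP.trans_le (pr_le_pr_comp p hp W Prod.snd i),
      hP.trans_le (pr_le_pr_comp p hp W (fun i => i.2.2) i)⟩
  have hQsum : ∑ i, Q i = ∑ i, P i := calc
    ∑ i, Q i = ∑ x, ∑ y, ∑ z, q₁ (x, z) * q₂ (y, z) / r z := by
      simp only [Fintype.sum_prod_type, Q]
    _ = ∑ z, (∑ x, q₁ (x, z)) * (∑ y, q₂ (y, z)) / r z := by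
      simp only [sum_mul_sum, sum_div]
      exact (sum_congr rfl fun x _ => sum_comm).trans sum_comm
    _ = ∑ z, r z := by simp only [q₁, q₂, r, sum_pr_pair, mul_self_div_self]
    _ = ∑ i, P i := by simp only [r, P, sum_pr]
  have hexpand : ent p (fun ω => (X ω, Z ω)) + ent p (fun ω => (Y ω, Z ω)) -
      (ent p W + ent p Z) = ∑ i, P i * (log (P i) - log (Q i)) := calc
    _ = ∑ ω, p ω * (log (P (W ω)) + log (r (W ω).2.2) - log (q₁ ((W ω).1, (W ω).2.2))
          - log (q₂ (W ω).2)) := by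
      simp only [ent_eq_sum_mul_neg_log, ← sum_add_distrib, ← sum_sub_distrib]
      exact sum_congr rfl fun ω _ => by ring
    _ = ∑ i, P i * (log (P i) + log (r i.2.2) - log (q₁ (i.1, i.2.2)) - log (q₂ i.2)) :=
      (sum_pr_mul p W fun i =>
        log (P i) + log (r i.2.2) - log (q₁ (i.1, i.2.2)) - log (q₂ i.2)).symm
    _ = ∑ i, P i * (log (P i) - log (Q i)) := by
      refine sum_congr rfl fun i _ => ?_
      by_cases hi : P i = 0
      · simp [hi]
      obtain ⟨h₁, h₂, hr⟩ := hpos i hi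
      rw [log_div (mul_pos h₁ h₂).ne' hr.ne', log_mul h₁.ne' h₂.ne']
      ring
  have hgibbs := sum_mul_log_sub_log_nonneg (pr_nonneg p hp W)
    (fun i => div_nonneg (mul_nonneg (pr_nonneg p hp _ _) (pr_nonneg p hp _ _))
      (pr_nonneg p hp _ _))
    (fun i hi => by obtain ⟨h₁, h₂, hr⟩ := hpos i hi; positivity) hQsum.le
  linarith

lemma condEnt_le_condEnt_comp [Fintype S] [Fintype T] [Fintype U] (hp : ∀ ω, 0 ≤ p ω)
    (X : Ω → S) (Y : Ω → T) (g : T → U) :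
    condEnt p X Y ≤ condEnt p X (fun ω => g (Y ω)) := by
  have hXY : ent p (fun ω => (X ω, Y ω, g (Y ω))) = ent p (fun ω => (X ω, Y ω)) :=
    ent_comp_of_injective p (f := fun q : S × T => (q.1, q.2, g q.2))
      (fun q q' h => by simp_all [Prod.ext_iff]) fun ω => (X ω, Y ω)
  have hY : ent p (fun ω => (Y ω, g (Y ω))) = ent p Y :=
    ent_comp_of_injective p (f := fun y => (y, g y)) (fun y y' h => (Prod.ext_iff.1 h).1) Y
  have := ent_submodular p hp X Y fun ω => g (Y ω)
  unfold condEnt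
  linarith

end

section

variable {Ω : Type*} [Fintype Ω] (p : Ω → ℝ) {A : Type*} {S : A → Type*} [∀ α, Fintype (S α)]
  (X : ∀ α, Ω → S α)

lemma ent_restrict_insert {a : A} {s : Finset A} (ha : a ∉ s) :
    ent p (fun ω => (insert a s).restrict (jointVar X ω)) =
      condEnt p (X a) (fun ω => s.restrict (jointVar X ω)) +
        ent p (fun ω => s.restrict (jointVar X ω)) := by
  rw [condEnt, sub_add_cancel]
  refine (ent_comp_of_injective p (f := fun g : (∀ β : ↥(insert a s), S β) =>
    (g ⟨a, mem_insert_self a s⟩, restrict₂ (subset_insert a s) g)) ?_ _).symm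
  intro g g' h
  funext ⟨β, hβ⟩
  rcases mem_insert.1 hβ with rfl | hβs
  · exact congrArg Prod.fst h
  · exact congrFun (congrArg Prod.snd h) ⟨β, hβs⟩

lemma sum_condEnt_restVar_le [Fintype A] (hp : ∀ ω, 0 ≤ p ω) (s : Finset A) :
    ∑ α ∈ s, condEnt p (X α) (restVar X α) ≤
      ent p (fun ω => s.restrict (jointVar X ω)) -
        ent p (fun ω => (∅ : Finset A).restrict (jointVar X ω)) := by
  induction s using Finset.induction_on with
  | empty => simp
  | insert a s ha ih =>
    have hcond : condEnt p (X a) (restVar X a) ≤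
        condEnt p (X a) (fun ω => s.restrict (jointVar X ω)) :=
      condEnt_le_condEnt_comp p hp (X a) (restVar X a)
        fun h (β : s) => h ⟨β, ne_of_mem_of_not_mem β.2 ha⟩
    rw [sum_insert ha, ent_restrict_insert p X ha]
    linarith

end

/-- The binding information of a finite family of discrete random
variables is nonnegative. -/
theorem bindingInfo_nonneg {Ω : Type*} [Fintype Ω] (p : Ω → ℝ)
    (hp : ∀ ω, 0 ≤ p ω) (hsum : ∑ ω, p ω = 1)
    {A : Type*} [Fintype A] {S : A → Type*} [∀ α, Fintype (S α)]
    (X : ∀ α, Ω → S α) :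
    0 ≤ bindingInfo p X := by
  have hchain := sum_condEnt_restVar_le p X hp univ
  have hjoint : ent p (fun ω => (univ : Finset A).restrict (jointVar X ω)) = ent p (jointVar X) :=
    ent_comp_of_injective p (fun g g' h => funext fun α => congrFun h ⟨α, mem_univ α⟩) _
  rw [hjoint, ent_of_subsingleton p hsum (fun ω => (∅ : Finset A).restrict (jointVar X ω))]
    at hchain
  unfold bindingInfo
  linarith
end
end

section
/- For a finite sequence X_1,…,X_N of discrete random variables, the sum over t of the conditional mutual informations I(X_t ; X_{(t+1)..N} | X_{1..(t-1)}) equals H(X_{1..N}) - Σ_{t=1}^N H(X_t | X_{1..N \ {t}}). -/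
open scoped Classical
open Finset Real

noncomputable section

/-- Conditional mutual information `I(X ; Y | Z)`. -/
def cmi {Ω : Type*} [Fintype Ω] (p : Ω → ℝ) {S T U : Type*}
    [Fintype S] [Fintype T] [Fintype U]
    (X : Ω → S) (Y : Ω → T) (Z : Ω → U) : ℝ :=
  condEnt p X Z - condEnt p X (fun ω => (Y ω, Z ω))

/-- The variables strictly before `t`. -/
def pastVar {Ω : Type*} {N : ℕ} {S : Fin N → Type*} (X : ∀ i, Ω → S i) (t : Fin N) :
    Ω → ∀ i : {i : Fin N // i < t}, S i.1 :=
  fun ω i => X i.1 ω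

/-- The variables strictly after `t`. -/
def futVar {Ω : Type*} {N : ℕ} {S : Fin N → Type*} (X : ∀ i, Ω → S i) (t : Fin N) :
    Ω → ∀ i : {i : Fin N // t < i}, S i.1 :=
  fun ω i => X i.1 ω


lemma ent_comp_inj {Ω : Type*} [Fintype Ω] (p : Ω → ℝ) {S T : Type*} [Fintype S] [Fintype T]
    (f : S → T) (hf : Function.Injective f) (Y : Ω → S) :
    ent p (fun ω => f (Y ω)) = ent p Y := by
  have hpr : ∀ s, pr p (fun ω => f (Y ω)) (f s) = pr p Y s := by
    intro s
    unfold pr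
    refine Finset.sum_congr rfl fun ω _ => ?_
    simp [hf.eq_iff]
  unfold ent
  calc ∑ t : T, Real.negMulLog (pr p (fun ω => f (Y ω)) t)
      = ∑ t ∈ Finset.univ.image f, Real.negMulLog (pr p (fun ω => f (Y ω)) t) := by
        refine (Finset.sum_subset (Finset.subset_univ _) ?_).symm
        intro t _ ht
        have h0 : pr p (fun ω => f (Y ω)) t = 0 := by
          unfold pr
          refine Finset.sum_eq_zero fun ω _ => ?_
          rw [if_neg]
          exact fun h => ht (Finset.mem_image.mpr ⟨Y ω, Finset.mem_univ _, h⟩)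
        simp [h0]
    _ = ∑ s : S, Real.negMulLog (pr p (fun ω => f (Y ω)) (f s)) :=
        Finset.sum_image (fun x _ y _ h => hf h)
    _ = ∑ s : S, Real.negMulLog (pr p Y s) := by simp [hpr]

lemma ent_unique {Ω : Type*} [Fintype Ω] (p : Ω → ℝ) (hsum : ∑ ω, p ω = 1)
    {S : Type*} [Fintype S] [Subsingleton S] [Nonempty S] (Y : Ω → S) :
    ent p Y = 0 := by
  haveI : Unique S := uniqueOfSubsingleton (Classical.arbitrary S)
  unfold ent
  rw [Fintype.sum_unique]
  have : pr p Y default = 1 := by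
    unfold pr
    rw [← hsum]
    exact Finset.sum_congr rfl fun ω _ => if_pos (Subsingleton.elim _ _)
  simp [this]

/-- The variables with index less than `k : ℕ`. -/
def partialVar {Ω : Type*} {N : ℕ} {S : Fin N → Type*} (X : ∀ i, Ω → S i) (k : ℕ) :
    Ω → ∀ i : {i : Fin N // i.val < k}, S i.1 := fun ω i => X i.1 ω

lemma chain_aux {Ω : Type*} [Fintype Ω] (p : Ω → ℝ) (hsum : ∑ ω, p ω = 1)
    {N : ℕ} {S : Fin N → Type*} [∀ i, Fintype (S i)] (X : ∀ i, Ω → S i) :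
    ∀ k, k ≤ N →
      ent p (partialVar X k)
        = ∑ t : Fin N, if t.val < k then condEnt p (X t) (partialVar X t.val) else 0 := by
  intro k
  induction k with
  | zero =>
    intro _
    haveI : Subsingleton (∀ i : {i : Fin N // i.val < 0}, S i.1) :=
      ⟨fun f g => funext fun i => absurd i.2 (Nat.not_lt_zero _)⟩
    haveI : Nonempty (∀ i : {i : Fin N // i.val < 0}, S i.1) :=
      ⟨fun i => absurd i.2 (Nat.not_lt_zero _)⟩
    rw [ent_unique p hsum]
    simp
  | succ k ih =>
    intro hk
    have hkN : k < N := hk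
    have step : ent p (partialVar X (k+1))
        = ent p (fun ω => (X ⟨k, hkN⟩ ω, partialVar X k ω)) := by
      have := ent_comp_inj p
        (f := fun g : (∀ i : {i : Fin N // i.val < k+1}, S i.1) =>
          (g ⟨⟨k, hkN⟩, Nat.lt_succ_self k⟩,
           fun i : {i : Fin N // i.val < k} => g ⟨i.1, Nat.lt_succ_of_lt i.2⟩))
        (hf := ?_) (Y := partialVar X (k+1))
      · exact this.symm
      · intro g g' h
        have h1 := congrArg Prod.fst h
        have h2 := congrArg Prod.snd h
        funext i
        rcases Nat.lt_or_ge i.1.val k with hlt | hge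
        · exact congrFun h2 ⟨i.1, hlt⟩
        · have : i.1.val = k := Nat.le_antisymm (Nat.lt_succ_iff.mp i.2) hge
          have hi : i = ⟨⟨k, hkN⟩, Nat.lt_succ_self k⟩ := by
            ext
            exact this
          rw [hi]; exact h1
    rw [step]
    have : ent p (fun ω => (X ⟨k, hkN⟩ ω, partialVar X k ω))
        = condEnt p (X ⟨k, hkN⟩) (partialVar X k) + ent p (partialVar X k) := by
      unfold condEnt; ring
    rw [this, ih (Nat.le_of_lt hkN)]
    have hsplit : ∀ t : Fin N,
        (if t.val < k+1 then condEnt p (X t) (partialVar X t.val) else 0)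
          = (if t.val < k then condEnt p (X t) (partialVar X t.val) else 0)
            + (if t = ⟨k, hkN⟩ then condEnt p (X t) (partialVar X t.val) else 0) := by
      intro t
      by_cases h1 : t = ⟨k, hkN⟩
      · subst h1; simp
      · have hne : t.val ≠ k := fun hc => h1 (Fin.ext hc)
        by_cases h2 : t.val < k
        · simp [h2, Nat.lt_succ_of_lt h2, h1]
        · simp [h1, h2, show ¬ t.val < k+1 by omega]
    rw [Finset.sum_congr rfl (fun t _ => hsplit t), Finset.sum_add_distrib]
    rw [Finset.sum_ite_eq' Finset.univ (⟨k, hkN⟩ : Fin N)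
      (fun t => condEnt p (X t) (partialVar X t.val))]
    simp [add_comm]

lemma chain {Ω : Type*} [Fintype Ω] (p : Ω → ℝ) (hsum : ∑ ω, p ω = 1)
    {N : ℕ} {S : Fin N → Type*} [∀ i, Fintype (S i)] (X : ∀ i, Ω → S i) :
    ∑ t : Fin N, condEnt p (X t) (pastVar X t) = ent p (jointVar X) := by
  have h1 := chain_aux p hsum X N le_rfl
  have h2 : ent p (partialVar X N) = ent p (jointVar X) := by
    have := ent_comp_inj p
      (f := fun g : (∀ i : {i : Fin N // i.val < N}, S i.1) =>
        (fun i : Fin N => g ⟨i, i.isLt⟩ : ∀ i, S i))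
      (hf := ?_) (Y := partialVar X N)
    · exact this.symm
    · intro g g' h
      funext i
      exact congrFun h i.1
  have h3 : ∀ t : Fin N, pastVar X t = partialVar X t.val := fun t => rfl
  rw [← h2, h1]
  refine Finset.sum_congr rfl fun t _ => ?_
  rw [if_pos t.isLt, h3]

lemma condEnt_futpast {Ω : Type*} [Fintype Ω] (p : Ω → ℝ)
    {N : ℕ} {S : Fin N → Type*} [∀ i, Fintype (S i)] (X : ∀ i, Ω → S i) (t : Fin N) :
    condEnt p (X t) (fun ω => (futVar X t ω, pastVar X t ω))
      = condEnt p (X t) (restVar X t) := by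
  set g : (∀ β : {β : Fin N // β ≠ t}, S β.1) →
      (∀ i : {i : Fin N // t < i}, S i.1) × (∀ i : {i : Fin N // i < t}, S i.1) :=
    fun r => (fun i => r ⟨i.1, ne_of_gt i.2⟩, fun i => r ⟨i.1, ne_of_lt i.2⟩) with hg
  have hginj : Function.Injective g := by
    intro r r' h
    funext β
    rcases lt_or_gt_of_ne β.2 with hlt | hgt
    · exact congrFun (congrArg Prod.snd h) ⟨β.1, hlt⟩
    · exact congrFun (congrArg Prod.fst h) ⟨β.1, hgt⟩
  have h1 : ent p (fun ω => (futVar X t ω, pastVar X t ω)) = ent p (restVar X t) :=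
    ent_comp_inj p g hginj (restVar X t)
  have h2 : ent p (fun ω => (X t ω, (futVar X t ω, pastVar X t ω)))
      = ent p (fun ω => (X t ω, restVar X t ω)) :=
    ent_comp_inj p (Prod.map id g) (Function.injective_id.prodMap hginj)
      (fun ω => (X t ω, restVar X t ω))
  unfold condEnt
  rw [h1, h2]

/-- the accumulated predictive information rate terms
`I(X_t ; X_{(t+1)..N} | X_{1..(t-1)})` sum to the binding information
`H(X_{1..N}) - Σ_t H(X_t | X_{1..N \ {t}})`. -/
theorem sum_pir_eq_bindingInfo {Ω : Type*} [Fintype Ω] (p : Ω → ℝ)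
    (hp : ∀ ω, 0 ≤ p ω) (hsum : ∑ ω, p ω = 1)
    {N : ℕ} {S : Fin N → Type*} [∀ i, Fintype (S i)] (X : ∀ i, Ω → S i) :
    ∑ t, cmi p (X t) (futVar X t) (pastVar X t)
      = ent p (jointVar X) - ∑ t, condEnt p (X t) (restVar X t) := by
  have key : ∀ t, cmi p (X t) (futVar X t) (pastVar X t)
      = condEnt p (X t) (pastVar X t) - condEnt p (X t) (restVar X t) := by
    intro t
    unfold cmi
    rw [condEnt_futpast p X t]
  rw [Finset.sum_congr rfl (fun t _ => key t), Finset.sum_sub_distrib,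
    chain p hsum X]
end
end
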